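/- Under the statistics hypotheses, the function m_h (equal to the divided difference ([x·h(x) − H(x)] − [y·h(y) − H(y)])/(h(x) − h(y)) off the diagonal and to x on the diagonal) is continuous on (0,a) × (0,a); in particular, for every z ∈ (0,a), m_h(x,y) → z as (x,y) → (z,z) within (0,a) × (0,a). -/

import Mathlib

open scoped Interval Topology

/-- The set of admissible densities `I_h = (0, a)`, where `a ∈ (0, +∞]`. -/
def Ih (a : EReal) : Set ℝ := {x : ℝ | 0 < x ∧ (x : EReal) < a}

/-- The antiderivative `H(x) = ∫₁ˣ h(s) ds` of the statistics function. -/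
noncomputable def Hfun (h : ℝ → ℝ) (x : ℝ) : ℝ := ∫ s in (1:ℝ)..x, h s

/-- The mean function `m_h`, given by the divided difference of `x ↦ x h(x) - H(x)`
with respect to `h` off the diagonal. -/
noncomputable def mh (h H : ℝ → ℝ) (x y : ℝ) : ℝ :=
  if x = y then x else ((x * h x - H x) - (y * h y - H y)) / (h x - h y)

/-!
By Cauchy's mean value theorem applied to `F x = x h(x) - H(x)` and `h`, whose derivatives are
`x h'(x)` and `h'(x)`, the divided difference `m_h(x, y)` equals some `c` strictly between `x`
and `y`. Hence `m_h` is squeezed between `min x y` and `max x y`, which gives continuity on the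
diagonal; off the diagonal `m_h` is a quotient of continuous functions with nonvanishing
denominator, since `h' > 0` makes `h` injective.
-/

open Set Filter

theorem isOpen_Ih (a : EReal) : IsOpen (Ih a) :=
  isOpen_Ioi.inter (isOpen_Iio.preimage continuous_coe_real_ereal)

theorem ordConnected_Ih (a : EReal) : (Ih a).OrdConnected :=
  ordConnected_Ioi.inter (ordConnected_Iio.preimage_mono EReal.coe_strictMono.monotone)

theorem hasDerivAt_Hfun {s : Set ℝ} {h : ℝ → ℝ} (hs : IsOpen s) (hs' : s.OrdConnected)
    (h1 : 1 ∈ s) (hc : ContinuousOn h s) {x : ℝ} (hx : x ∈ s) :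
    HasDerivAt (Hfun h) (h x) x :=
  intervalIntegral.integral_hasDerivAt_right
    (hc.mono (hs'.uIcc_subset h1 hx)).intervalIntegrable
    (hc.stronglyMeasurableAtFilter hs x hx) (hc.continuousAt (hs.mem_nhds hx))

theorem strictMonoOn_of_hasDerivAt_pos {s : Set ℝ} (hs : s.OrdConnected) {f f' : ℝ → ℝ}
    (hf : ∀ x ∈ s, HasDerivAt f (f' x) x) (hf' : ∀ x ∈ s, 0 < f' x) : StrictMonoOn f s :=
  strictMonoOn_of_deriv_pos hs.convex (fun x hx => (hf x hx).continuousAt.continuousWithinAt)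
    fun x hx => (hf x (interior_subset hx)).deriv ▸ hf' x (interior_subset hx)

theorem tendsto_of_eventually_mem_uIcc {α β : Type*} [LinearOrder α] [TopologicalSpace α]
    [OrderTopology α] {l : Filter β} {u v φ : β → α} {z : α} (hu : Tendsto u l (𝓝 z))
    (hv : Tendsto v l (𝓝 z)) (hφ : ∀ᶠ b in l, φ b ∈ uIcc (u b) (v b)) :
    Tendsto φ l (𝓝 z) := by
  have hmin := hu.min hv
  have hmax := hu.max hv
  rw [min_self] at hmin
  rw [max_self] at hmax
  exact tendsto_of_tendsto_of_tendsto_of_le_of_le' hmin hmax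
    (hφ.mono fun _ hb => hb.1) (hφ.mono fun _ hb => hb.2)

section mh

variable {h h' H : ℝ → ℝ}

theorem mh_self (h H : ℝ → ℝ) (x : ℝ) : mh h H x x = x :=
  if_pos rfl

theorem mh_of_ne {x y : ℝ} (hxy : x ≠ y) :
    mh h H x y = ((x * h x - H x) - (y * h y - H y)) / (h x - h y) :=
  if_neg hxy

theorem mh_comm (h H : ℝ → ℝ) (x y : ℝ) : mh h H x y = mh h H y x := by
  rcases eq_or_ne x y with rfl | hxy
  · rfl
  rw [mh_of_ne hxy, mh_of_ne hxy.symm, ← neg_div_neg_eq, neg_sub, neg_sub]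

theorem mh_mem_Ioo {x y : ℝ} (hxy : x < y) (hh : ∀ t ∈ Icc x y, HasDerivAt h (h' t) t)
    (hH : ∀ t ∈ Icc x y, HasDerivAt H (h t) t) (hpos : ∀ t ∈ Icc x y, 0 < h' t) :
    mh h H x y ∈ Ioo x y := by
  have hF : ∀ t ∈ Icc x y, HasDerivAt (fun t => t * h t - H t) (t * h' t) t := fun t ht =>
    (((hasDerivAt_id' t).mul (hh t ht)).sub (hH t ht)).congr_deriv (by ring)
  obtain ⟨c, hc, hslope⟩ := exists_ratio_hasDerivAt_eq_ratio_slope _ _ hxy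
    (fun t ht => (hF t ht).continuousAt.continuousWithinAt)
    (fun t ht => hF t (Ioo_subset_Icc_self ht)) h h'
    (fun t ht => (hh t ht).continuousAt.continuousWithinAt)
    (fun t ht => hh t (Ioo_subset_Icc_self ht))
  have hmono : h x < h y := strictMonoOn_of_hasDerivAt_pos ordConnected_Icc hh hpos
    (left_mem_Icc.2 hxy.le) (right_mem_Icc.2 hxy.le) hxy
  have hc_eq : (h y - h x) * c = (y * h y - H y) - (x * h x - H x) :=
    mul_right_cancel₀ (hpos c (Ioo_subset_Icc_self hc)).ne' (by linear_combination hslope)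
  convert hc using 1
  rw [mh_of_ne hxy.ne, div_eq_iff (sub_ne_zero.2 hmono.ne)]
  linear_combination hc_eq

theorem continuousAt_mh_of_ne {x y : ℝ} (hxy : x ≠ y) (hhxy : h x ≠ h y)
    (hx : ContinuousAt h x) (hy : ContinuousAt h y) (hHx : ContinuousAt H x)
    (hHy : ContinuousAt H y) : ContinuousAt (fun p : ℝ × ℝ => mh h H p.1 p.2) (x, y) := by
  have h₁ : ContinuousAt (fun p : ℝ × ℝ => h p.1) (x, y) := hx.comp continuousAt_fst
  have h₂ : ContinuousAt (fun p : ℝ × ℝ => h p.2) (x, y) := hy.comp continuousAt_snd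
  have H₁ : ContinuousAt (fun p : ℝ × ℝ => H p.1) (x, y) := hHx.comp continuousAt_fst
  have H₂ : ContinuousAt (fun p : ℝ × ℝ => H p.2) (x, y) := hHy.comp continuousAt_snd
  have hquot := (((continuousAt_fst.mul h₁).sub H₁).sub ((continuousAt_snd.mul h₂).sub H₂)).div
    (h₁.sub h₂) (sub_ne_zero.2 hhxy)
  refine hquot.congr ?_
  filter_upwards [(isOpen_ne_fun continuous_fst continuous_snd).mem_nhds hxy] with p hp
  exact (mh_of_ne hp).symm

variable {s : Set ℝ} (hs : s.OrdConnected) (hh : ∀ t ∈ s, HasDerivAt h (h' t) t)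
  (hH : ∀ t ∈ s, HasDerivAt H (h t) t) (hpos : ∀ t ∈ s, 0 < h' t)
include hs hh hH hpos

theorem mh_mem_uIcc {x y : ℝ} (hx : x ∈ s) (hy : y ∈ s) : mh h H x y ∈ uIcc x y := by
  have key : ∀ {x y}, x ∈ s → y ∈ s → x < y → mh h H x y ∈ uIcc x y := fun hx hy hxy =>
    Icc_subset_uIcc <| Ioo_subset_Icc_self <| mh_mem_Ioo hxy (fun t ht => hh t (hs.out hx hy ht))
      (fun t ht => hH t (hs.out hx hy ht)) (fun t ht => hpos t (hs.out hx hy ht))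
  rcases lt_trichotomy x y with hxy | rfl | hxy
  · exact key hx hy hxy
  · simp [mh_self]
  · rw [mh_comm, uIcc_comm]
    exact key hy hx hxy

theorem tendsto_mh_nhdsWithin_diag {z : ℝ} :
    Tendsto (fun p : ℝ × ℝ => mh h H p.1 p.2) (𝓝[s ×ˢ s] (z, z)) (𝓝 z) :=
  tendsto_of_eventually_mem_uIcc (continuousAt_fst.tendsto.mono_left nhdsWithin_le_nhds)
    (continuousAt_snd.tendsto.mono_left nhdsWithin_le_nhds)
    (eventually_mem_nhdsWithin.mono fun _ hp => mh_mem_uIcc hs hh hH hpos hp.1 hp.2)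

theorem continuousOn_mh : ContinuousOn (fun p : ℝ × ℝ => mh h H p.1 p.2) (s ×ˢ s) := by
  rintro ⟨x, y⟩ ⟨hx, hy⟩
  rcases eq_or_ne x y with rfl | hxy
  · simpa [ContinuousWithinAt, mh_self] using tendsto_mh_nhdsWithin_diag hs hh hH hpos
  · have hinj := (strictMonoOn_of_hasDerivAt_pos hs hh hpos).injOn
    exact (continuousAt_mh_of_ne hxy (fun he => hxy (hinj hx hy he))
      (hh x hx).continuousAt (hh y hy).continuousAt
      (hH x hx).continuousAt (hH y hy).continuousAt).continuousWithinAt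

end mh

theorem mh_continuousOn_general
    (a : EReal) (ha1 : ((1:ℝ) : EReal) < a)
    (h h' : ℝ → ℝ)
    (hderiv : ∀ x ∈ Ih a, HasDerivAt h (h' x) x)
    (hpos : ∀ x ∈ Ih a, 0 < h' x) :
    ContinuousOn (fun p : ℝ × ℝ => mh h (Hfun h) p.1 p.2) (Ih a ×ˢ Ih a) ∧
    ∀ z ∈ Ih a,
      Filter.Tendsto (fun p : ℝ × ℝ => mh h (Hfun h) p.1 p.2)
        (𝓝[Ih a ×ˢ Ih a] (z, z)) (𝓝 z) := by
  have hs := ordConnected_Ih a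
  have hH : ∀ x ∈ Ih a, HasDerivAt (Hfun h) (h x) x := fun x hx =>
    hasDerivAt_Hfun (isOpen_Ih a) hs ⟨one_pos, ha1⟩
      (fun t ht => (hderiv t ht).continuousAt.continuousWithinAt) hx
  exact ⟨continuousOn_mh hs hderiv hH hpos,
    fun _ _ => tendsto_mh_nhdsWithin_diag hs hderiv hH hpos⟩

/-- Under the statistics hypotheses, `m_h` is continuous on `(0,a) × (0,a)`;
in particular it tends to `z` at every diagonal point `(z, z)`. -/
theorem mh_continuousOn
    (a : EReal) (ha : 0 < a) (ha1 : ((1:ℝ) : EReal) < a)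
    (h h' : ℝ → ℝ)
    (hderiv : ∀ x ∈ Ih a, HasDerivAt h (h' x) x)
    (hcont : ContinuousOn h' (Ih a))
    (hpos : ∀ x ∈ Ih a, 0 < h' x)
    (hbij : Set.BijOn h (Ih a) Set.univ) :
    ContinuousOn (fun p : ℝ × ℝ => mh h (Hfun h) p.1 p.2) (Ih a ×ˢ Ih a) ∧
    ∀ z ∈ Ih a,
      Filter.Tendsto (fun p : ℝ × ℝ => mh h (Hfun h) p.1 p.2)
        (𝓝[Ih a ×ˢ Ih a] (z, z)) (𝓝 z) :=
  mh_continuousOn_general a ha1 h h' hderiv hpos
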